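/- The exact reachable set of a ReLU layer on a convex polytope S ⊆ ℝ^n equals the union over sign patterns ε ∈ {±1}^n of relu(S ∩ O_ε), where O_ε is the closed orthant with signs ε; each piece relu(S ∩ O_ε) is a convex polytope, hence the output reachable set is a finite union of at most 2^n convex polytopes. -/

import Mathlib

/-!
On the orthant `O_ε`, `relu` agrees with the linear projection onto the coordinates `i` with
`ε i = true`. Since the orthants cover `ℝⁿ`, this gives the union formula, and it reduces the
polytope claim to the fact that cutting `conv V` by finitely many halfspaces leaves a polytope.

For a single halfspace `{f ≤ c}` the cut is the hull of the vertices inside it together with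
the points where the edges `[v, w]` from a vertex inside to a vertex outside cross `f = c`.
A point `x` of the cut lies on a segment `[a, b]` with `a` in the hull of the inside
vertices and `b` in the hull of the outside ones, hence on `[a, m]`, where `m` is the crossing
point of `[a, b]`. Central projection from a point onto the hyperplane `f = c` preserves
convex combinations (up to reweighting by the distance in `f`). Applying this twice puts `m`
in the hull of the edge crossings.
-/

def IsPolytope {n : ℕ} (S : Set (Fin n → ℝ)) : Prop :=
  ∃ V : Finset (Fin n → ℝ), S = convexHull ℝ (V : Set (Fin n → ℝ))

open Set AffineMap

section CrossPoint

variable {𝕜 E : Type*} [Field 𝕜] [AddCommGroup E] [Module 𝕜 E] (f : E →ₗ[𝕜] 𝕜) (c : 𝕜)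

/-- The point where the line through `p` and `q` meets the level set `f = c`;
it is `p` when `f p = f q`. -/
def crossPoint (p q : E) : E :=
  lineMap p q ((c - f p) / (f q - f p))

variable {f c}

theorem map_crossPoint {p q : E} (h : f p ≠ f q) : f (crossPoint f c p q) = c := by
  have : f q - f p ≠ 0 := sub_ne_zero.mpr h.symm
  simp only [crossPoint, lineMap_apply_module', map_add, map_smul, map_sub, smul_eq_mul]
  field_simp
  ring

theorem crossPoint_comm {p q : E} (h : f p ≠ f q) :
    crossPoint f c p q = crossPoint f c q p := by
  have : f q - f p ≠ 0 := sub_ne_zero.mpr h.symm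
  have : f p - f q ≠ 0 := sub_ne_zero.mpr h
  rw [crossPoint, crossPoint, ← lineMap_apply_one_sub]
  congr 1
  field_simp
  ring

theorem crossPoint_neg (p q : E) : crossPoint (-f) (-c) p q = crossPoint f c p q := by
  simp only [crossPoint, LinearMap.neg_apply, sub_neg_eq_add, neg_add_eq_sub]
  rw [← neg_div_neg_eq, neg_sub, neg_sub]

variable [LinearOrder 𝕜] [IsStrictOrderedRing 𝕜]

theorem crossPoint_mem_segment {p q : E} (hp : f p ≤ c) (hq : c ≤ f q) (h : f p < f q) :
    crossPoint f c p q ∈ segment 𝕜 p q :=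
  lineMap_mem_segment 𝕜 p q
    ⟨div_nonneg (sub_nonneg.mpr hp) (sub_pos.mpr h).le,
      div_le_one_of_le₀ (by linarith) (sub_pos.mpr h).le⟩

theorem mem_segment_crossPoint {a b x : E} (hx : x ∈ segment 𝕜 a b) (ha : f a ≤ c) (hb : c < f b)
    (hxc : f x ≤ c) : x ∈ segment 𝕜 a (crossPoint f c a b) := by
  rw [segment_eq_image_lineMap] at hx
  obtain ⟨s, ⟨hs₀, -⟩, rfl⟩ := hx
  have hab : 0 < f b - f a := by linarith
  have hs : s ≤ (c - f a) / (f b - f a) := by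
    rw [le_div_iff₀ hab]
    simp only [lineMap_apply_module', map_add, map_smul, map_sub, smul_eq_mul] at hxc
    linarith
  rw [mem_segment_iff_wbtw, crossPoint, lineMap_apply_module', lineMap_apply_module']
  exact wbtw_smul_vadd_smul_vadd_of_nonneg_of_le a (b - a) hs₀ hs

theorem crossPoint_mem_convexHull_image {p y : E} {t : Set E} (ht : ∀ q ∈ t, f p < f q)
    (hy : y ∈ convexHull 𝕜 t) : crossPoint f c p y ∈ convexHull 𝕜 (crossPoint f c p '' t) := by
  suffices h : convexHull 𝕜 t ⊆
      {q | f p < f q ∧ crossPoint f c p q ∈ convexHull 𝕜 (crossPoint f c p '' t)} from (h hy).2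
  refine convexHull_min (fun q hq => ⟨ht q hq, subset_convexHull 𝕜 _ (mem_image_of_mem _ hq)⟩) ?_
  rintro q₁ ⟨hq₁, hm₁⟩ q₂ ⟨hq₂, hm₂⟩ a b ha hb hab
  have hd₁ : 0 < f q₁ - f p := sub_pos.mpr hq₁
  have hd₂ : 0 < f q₂ - f p := sub_pos.mpr hq₂
  set d := a * (f q₁ - f p) + b * (f q₂ - f p)
  have hd : 0 < d := convex_Ioi (0 : 𝕜) hd₁ hd₂ ha hb hab
  have hfq : f (a • q₁ + b • q₂) - f p = d := by
    simp only [map_add, map_smul, smul_eq_mul, d]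
    linear_combination (f p) * hab
  refine ⟨by linarith, ?_⟩
  have hcombo : crossPoint f c p (a • q₁ + b • q₂) =
      (a * (f q₁ - f p) / d) • crossPoint f c p q₁ + (b * (f q₂ - f p) / d) • crossPoint f c p q₂ := by
    simp only [crossPoint, lineMap_apply_module', hfq]
    obtain rfl : b = 1 - a := by linarith
    match_scalars
    · field_simp
    · field_simp
    · field_simp
      ring
  rw [hcombo]
  exact convex_convexHull 𝕜 _ hm₁ hm₂ (by positivity) (by positivity)
    (by rw [← add_div, div_self hd.ne'])

theorem crossPoint_mem_convexHull_image2 {s t : Set E} (hst : ∀ v ∈ s, ∀ w ∈ t, f v < f w)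
    {a b : E} (ha : a ∈ convexHull 𝕜 s) (hb : b ∈ convexHull 𝕜 t) :
    crossPoint f c a b ∈ convexHull 𝕜 (image2 (crossPoint f c) s t) := by
  have hat : ∀ w ∈ t, f a < f w := fun w hw =>
    convexHull_min (fun v hv => hst v hv w hw) (convex_halfSpace_lt f.isLinear (f w)) ha
  refine convexHull_min ?_ (convex_convexHull 𝕜 _) (crossPoint_mem_convexHull_image hat hb)
  rintro _ ⟨w, hw, rfl⟩
  have hws : ∀ v ∈ s, (-f) w < (-f) v := fun v hv => by simpa using hst v hv w hw
  rw [crossPoint_comm (hat w hw).ne, ← crossPoint_neg]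
  refine convexHull_mono ?_ (crossPoint_mem_convexHull_image hws ha)
  rintro _ ⟨v, hv, rfl⟩
  rw [crossPoint_neg, crossPoint_comm (hst v hv w hw).ne']
  exact mem_image2_of_mem hv hw

end CrossPoint

section HalfSpace

variable {𝕜 E : Type*} [Field 𝕜] [LinearOrder 𝕜] [IsStrictOrderedRing 𝕜]
  [AddCommGroup E] [Module 𝕜 E]

theorem convexHull_inter_halfSpace_le (f : E →ₗ[𝕜] 𝕜) (c : 𝕜) (s : Set E) :
    convexHull 𝕜 s ∩ {x | f x ≤ c} = convexHull 𝕜 ({x ∈ s | f x ≤ c} ∪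
      image2 (crossPoint f c) {x ∈ s | f x ≤ c} {x ∈ s | c < f x}) := by
  set A := {x ∈ s | f x ≤ c}
  set B := {x ∈ s | c < f x}
  have hAB : ∀ v ∈ A, ∀ w ∈ B, f v < f w := fun v hv w hw => hv.2.trans_lt hw.2
  have hA : ∀ a ∈ convexHull 𝕜 A, f a ≤ c :=
    convexHull_min (fun v hv => hv.2) (convex_halfSpace_le f.isLinear c)
  have hB : ∀ b ∈ convexHull 𝕜 B, c < f b :=
    convexHull_min (fun w hw => hw.2) (convex_halfSpace_gt f.isLinear c)
  apply Subset.antisymm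
  · rintro x ⟨hx, hxc⟩
    have hs : s = A ∪ B := by simp only [A, B, ← sep_or, le_or_gt, and_true, ofPred_mem_eq]
    rcases B.eq_empty_or_nonempty with hB₀ | hB₀
    · rw [hs, hB₀, union_empty] at hx
      exact convexHull_mono subset_union_left hx
    rcases A.eq_empty_or_nonempty with hA₀ | hA₀
    · rw [hs, hA₀, empty_union] at hx
      exact absurd hxc (hB x hx).not_ge
    rw [hs, convexHull_union hA₀ hB₀, mem_convexJoin] at hx
    obtain ⟨a, ha, b, hb, hx⟩ := hx
    refine (convex_convexHull 𝕜 _).segment_subset (convexHull_mono subset_union_left ha)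
      (convexHull_mono subset_union_right (crossPoint_mem_convexHull_image2 hAB ha hb))
      (mem_segment_crossPoint hx (hA a ha) (hB b hb) hxc)
  · refine convexHull_min (union_subset (fun x hx => ⟨subset_convexHull 𝕜 s hx.1, hx.2⟩) ?_)
      ((convex_convexHull 𝕜 s).inter (convex_halfSpace_le f.isLinear c))
    rintro _ ⟨v, hv, w, hw, rfl⟩
    have hvw := hAB v hv w hw
    exact ⟨(convex_convexHull 𝕜 s).segment_subset (subset_convexHull 𝕜 s hv.1)
      (subset_convexHull 𝕜 s hw.1) (crossPoint_mem_segment hv.2 hw.2.le hvw),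
      (map_crossPoint hvw.ne).le⟩

theorem Finset.exists_convexHull_inter_halfSpaces_le {ι : Type*} (g : ι → E →ₗ[𝕜] 𝕜)
    (c : ι → 𝕜) (t : Finset ι) (V : Finset E) :
    ∃ W : Finset E, convexHull 𝕜 ↑V ∩ {x | ∀ i ∈ t, g i x ≤ c i} = convexHull 𝕜 ↑W := by
  classical
  induction t using Finset.induction_on with
  | empty => exact ⟨V, by simp⟩
  | insert j t _ ih =>
    obtain ⟨W, hW⟩ := ih
    have hcut : convexHull 𝕜 ↑V ∩ {x | ∀ i ∈ insert j t, g i x ≤ c i} =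
        convexHull 𝕜 ↑W ∩ {x | g j x ≤ c j} := by
      rw [← hW]
      ext x
      simp only [Finset.mem_insert, forall_eq_or_imp, mem_ofPred_eq, mem_inter_iff]
      tauto
    rw [hcut, convexHull_inter_halfSpace_le]
    exact ⟨_, congrArg _ (toFinite _).coe_toFinset.symm⟩

end HalfSpace

section ReLU

variable {ι : Type*}

def relu (x : ι → ℝ) : ι → ℝ := fun i => max (x i) 0

def orthant (ε : ι → Bool) : Set (ι → ℝ) := {x | ∀ i, if ε i then 0 ≤ x i else x i ≤ 0}

theorem iUnion_orthant : ⋃ ε : ι → Bool, orthant ε = univ := by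
  refine eq_univ_of_forall fun x => mem_iUnion.mpr ⟨fun i => decide (0 ≤ x i), fun i => ?_⟩
  by_cases h : 0 ≤ x i <;> simp [h, le_of_not_ge]

theorem image_relu_eq_iUnion_image_inter_orthant (S : Set (ι → ℝ)) :
    relu '' S = ⋃ ε : ι → Bool, relu '' (S ∩ orthant ε) := by
  rw [← image_iUnion, ← inter_iUnion, iUnion_orthant, inter_univ]

def orthantProj (ε : ι → Bool) : (ι → ℝ) →ₗ[ℝ] (ι → ℝ) :=
  LinearMap.pi fun i => if ε i then LinearMap.proj i else 0

theorem relu_eqOn_orthant (ε : ι → Bool) : EqOn relu (orthantProj ε) (orthant ε) := by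
  intro x hx
  funext i
  have hxi := hx i
  cases h : ε i <;> simp_all [relu, orthantProj]

theorem orthant_eq_setOf_forall_le [Fintype ι] (ε : ι → Bool) :
    orthant ε = {x | ∀ i ∈ Finset.univ,
      (if ε i then -LinearMap.proj i else LinearMap.proj i : (ι → ℝ) →ₗ[ℝ] ℝ) x ≤ 0} := by
  ext x
  simp only [orthant, Finset.mem_univ, true_implies, mem_ofPred_eq]
  refine forall_congr' fun i => ?_
  cases ε i <;> simp

theorem isPolytope_image_relu_convexHull_inter_orthant {n : ℕ} (V : Finset (Fin n → ℝ))
    (ε : Fin n → Bool) : IsPolytope (relu '' (convexHull ℝ ↑V ∩ orthant ε)) := by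
  obtain ⟨W, hW⟩ := Finset.exists_convexHull_inter_halfSpaces_le
    (fun i => if ε i then -LinearMap.proj i else LinearMap.proj i) 0 Finset.univ V
  simp only [Pi.zero_apply] at hW
  refine ⟨W.image (orthantProj ε), ?_⟩
  rw [((relu_eqOn_orthant ε).mono inter_subset_right).image_eq, orthant_eq_setOf_forall_le,
    hW, LinearMap.image_convexHull, Finset.coe_image]

end ReLU

/-- The exact ReLU-layer reachable set of a polytope is the union, over the 2^n
sign patterns, of the ReLU images of the orthant pieces, each of which is a
convex polytope. -/
theorem relu_layer_exact_reachable_set {n : ℕ} (V : Finset (Fin n → ℝ)) :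
    ((fun (x : Fin n → ℝ) (i : Fin n) => max (x i) 0) ''
        convexHull ℝ (V : Set (Fin n → ℝ)) =
      ⋃ ε : Fin n → Bool,
        (fun (x : Fin n → ℝ) (i : Fin n) => max (x i) 0) ''
          (convexHull ℝ (V : Set (Fin n → ℝ)) ∩
            {x | ∀ i, if ε i then 0 ≤ x i else x i ≤ 0})) ∧
    ∀ ε : Fin n → Bool,
      IsPolytope ((fun (x : Fin n → ℝ) (i : Fin n) => max (x i) 0) ''
        (convexHull ℝ (V : Set (Fin n → ℝ)) ∩
          {x | ∀ i, if ε i then 0 ≤ x i else x i ≤ 0})) :=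
  ⟨image_relu_eq_iUnion_image_inter_orthant _, isPolytope_image_relu_convexHull_inter_orthant V⟩
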